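/- Suppose a nonnegative function $w(r)$ on $(0, r_0]$ satisfies: for all $r \le r_0/4$, either $w(r) \le 2^s r^{1-d/(2q)}$ or $w(r) \le \theta\, w(4r)$, where $\theta = 1 - 2^{-(s-1)} \in (0,1)$, $w$ is nondecreasing, and $q > d/2$. Then for all $r \le r_0$, $w(r) \le N (r/r_0)^\alpha$ with $\alpha = \min\{-\log_4 \theta,\, 1 - d/(2q)\}$ and $N = 4^\alpha \max\{w(r_0),\, 2^s r_0^{1-d/(2q)}\}$. -/
import Mathlib


/-- Abstract iteration lemma converting a dichotomy oscillation estimate into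
power-type decay. -/
theorem stmt11 (d : ℕ) (hd : 2 ≤ d) (s : ℕ) (hs : 0 < s) (q r0 : ℝ)
    (hq : (d : ℝ) / 2 < q) (hr0 : 0 < r0)
    (w : ℝ → ℝ) (hw0 : ∀ r ∈ Set.Ioc (0 : ℝ) r0, 0 ≤ w r)
    (hmono : ∀ r1 r2 : ℝ, 0 < r1 → r1 ≤ r2 → r2 ≤ r0 → w r1 ≤ w r2)
    (θ : ℝ) (hθ : θ = 1 - 1 / 2 ^ (s - 1)) (hθ0 : 0 < θ) (hθ1 : θ < 1)
    (hdich : ∀ r : ℝ, 0 < r → r ≤ r0 / 4 →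
      w r ≤ 2 ^ s * r ^ (1 - (d : ℝ) / (2 * q)) ∨ w r ≤ θ * w (4 * r)) :
    ∀ r : ℝ, 0 < r → r ≤ r0 → ∀ α N : ℝ,
      α = min (-(Real.logb 4 θ)) (1 - (d : ℝ) / (2 * q)) →
      N = 4 ^ α * max (w r0) (2 ^ s * r0 ^ (1 - (d : ℝ) / (2 * q))) →
      w r ≤ N * (r / r0) ^ α := by
  intro r hr hrr0 α N hα hN
  set β : ℝ := 1 - (d : ℝ) / (2 * q) with hβdef
  have hq0 : 0 < q := lt_of_le_of_lt (by positivity) hq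
  have hβ : 0 < β := by
    have h1 : (d : ℝ) / (2 * q) < 1 := by
      rw [div_lt_one (by positivity)]; linarith
    simp only [hβdef]; linarith
  have hα0 : 0 < α := by
    rw [hα]
    refine lt_min ?_ hβ
    have := Real.logb_neg (by norm_num : (1:ℝ) < 4) hθ0 hθ1
    linarith
  set M : ℝ := max (w r0) (2 ^ s * r0 ^ β) with hMdef
  have hM0 : 0 ≤ M := le_trans (hw0 r0 ⟨hr0, le_rfl⟩) (le_max_left _ _)
  have hθ4 : θ ≤ (4 : ℝ) ^ (-α) := by
    have hlog : (4 : ℝ) ^ Real.logb 4 θ = θ :=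
      Real.rpow_logb (by norm_num) (by norm_num) hθ0
    rw [← hlog]
    apply Real.rpow_le_rpow_of_exponent_le (by norm_num)
    have h1 : α ≤ -(Real.logb 4 θ) := hα ▸ min_le_left _ _
    linarith
  have key : ∀ n : ℕ, ∀ ρ : ℝ, 0 < ρ → r0 / 4 ^ (n + 1) < ρ → ρ ≤ r0 / 4 ^ n →
      w ρ ≤ M * (4 : ℝ) ^ (-(n : ℝ) * α) := by
    intro n
    induction n with
    | zero =>
      intro ρ hρ _ hρ2
      simp only [pow_zero, div_one] at hρ2
      have h1 : w ρ ≤ w r0 := hmono ρ r0 hρ hρ2 le_rfl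
      have h2 : w ρ ≤ M := h1.trans (le_max_left _ _)
      simp only [Nat.cast_zero, neg_zero, zero_mul, Real.rpow_zero, mul_one]
      exact h2
    | succ n ih =>
      intro ρ hρ hρ1 hρ2
      have h4n : (0 : ℝ) < 4 ^ (n + 1) := by positivity
      have h16 : (4 : ℝ) ≤ 4 ^ (n + 1) := by
        calc (4 : ℝ) = 4 ^ 1 := (pow_one _).symm
        _ ≤ 4 ^ (n + 1) := by
          apply pow_le_pow_right₀ (by norm_num); omega
      have hρr0 : ρ ≤ r0 / 4 := by
        refine hρ2.trans ?_
        apply div_le_div_of_nonneg_left hr0.le (by norm_num) h16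
      rcases hdich ρ hρ hρr0 with h | h
      · have h1 : ρ ^ β ≤ (r0 / 4 ^ (n + 1)) ^ β :=
          Real.rpow_le_rpow hρ.le hρ2 hβ.le
        have h2 : (r0 / 4 ^ (n + 1)) ^ β = r0 ^ β * (4 : ℝ) ^ (-((n : ℝ) + 1) * β) := by
          rw [Real.div_rpow hr0.le (by positivity), ← Real.rpow_natCast (4 : ℝ) (n + 1),
            ← Real.rpow_mul (by norm_num), div_eq_mul_inv,
            ← Real.rpow_neg (by norm_num)]
          push_cast
          ring_nf
        have hαβ : α ≤ β := hα ▸ min_le_right _ _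
        calc w ρ ≤ 2 ^ s * ρ ^ β := h
        _ ≤ 2 ^ s * (r0 / 4 ^ (n + 1)) ^ β := by
            apply mul_le_mul_of_nonneg_left h1 (by positivity)
        _ = (2 ^ s * r0 ^ β) * (4 : ℝ) ^ (-((n : ℝ) + 1) * β) := by rw [h2]; ring
        _ ≤ M * (4 : ℝ) ^ (-((n : ℝ) + 1) * β) := by
            apply mul_le_mul_of_nonneg_right (le_max_right _ _) (by positivity)
        _ ≤ M * (4 : ℝ) ^ (-((n : ℝ) + 1) * α) := by
            have hexp : (4:ℝ) ^ (-((n:ℝ)+1)*β) ≤ (4:ℝ) ^ (-((n:ℝ)+1)*α) := by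
              apply Real.rpow_le_rpow_of_exponent_le (by norm_num)
              nlinarith [Nat.cast_nonneg (α := ℝ) n]
            exact mul_le_mul_of_nonneg_left hexp hM0
        _ = M * (4 : ℝ) ^ (-((n + 1 : ℕ) : ℝ) * α) := by push_cast; ring_nf
      · have h4ρ1 : r0 / 4 ^ (n + 1) < 4 * ρ := by
          rw [div_lt_iff₀ (by positivity : (0:ℝ) < 4 ^ (n + 1 + 1))] at hρ1
          rw [div_lt_iff₀ h4n]
          calc r0 < ρ * 4 ^ (n + 1 + 1) := hρ1
          _ = 4 * ρ * 4 ^ (n + 1) := by ring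
        have h4ρ2 : 4 * ρ ≤ r0 / 4 ^ n := by
          rw [le_div_iff₀ (by positivity)]
          rw [le_div_iff₀ h4n] at hρ2
          calc 4 * ρ * 4 ^ n = ρ * 4 ^ (n + 1) := by ring
          _ ≤ r0 := hρ2
        have hih := ih (4 * ρ) (by linarith) h4ρ1 h4ρ2
        have h4ρr0 : 4 * ρ ≤ r0 := h4ρ2.trans (by
          apply div_le_self hr0.le
          exact one_le_pow₀ (by norm_num : (1:ℝ) ≤ 4))
        have hw4 : 0 ≤ w (4 * ρ) := hw0 _ ⟨by linarith, h4ρr0⟩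
        calc w ρ ≤ θ * w (4 * ρ) := h
        _ ≤ (4 : ℝ) ^ (-α) * (M * (4 : ℝ) ^ (-(n : ℝ) * α)) := by
            apply mul_le_mul hθ4 hih hw4 (by positivity)
        _ = M * (4 : ℝ) ^ (-((n : ℝ) + 1) * α) := by
            rw [mul_left_comm, ← Real.rpow_add (by norm_num : (0:ℝ) < 4)]
            ring_nf
        _ = M * (4 : ℝ) ^ (-((n + 1 : ℕ) : ℝ) * α) := by push_cast; ring_nf
  obtain ⟨m, hm⟩ := pow_unbounded_of_one_lt (r0 / r) (by norm_num : (1 : ℝ) < 4)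
  have hex : ∃ n : ℕ, r0 < r * 4 ^ (n + 1) := by
    refine ⟨m, ?_⟩
    rw [div_lt_iff₀ hr] at hm
    have h4m : (4 : ℝ) ^ m ≤ 4 ^ (m + 1) := by
      apply pow_le_pow_right₀ (by norm_num); omega
    nlinarith [pow_pos (show (0:ℝ) < 4 by norm_num) m]
  set n := Nat.find hex with hndef
  have hn1 : r0 < r * 4 ^ (n + 1) := Nat.find_spec hex
  have hn2 : r ≤ r0 / 4 ^ n := by
    rcases Nat.eq_zero_or_pos n with h0 | hpos
    · rw [h0]; simpa using hrr0
    · have hmin := Nat.find_min hex (Nat.sub_lt hpos one_pos)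
      push_neg at hmin
      rw [← hndef, show n - 1 + 1 = n by omega] at hmin
      rw [le_div_iff₀ (by positivity)]
      linarith
  have hwr : w r ≤ M * (4 : ℝ) ^ (-(n : ℝ) * α) :=
    key n r hr (by rw [div_lt_iff₀ (by positivity)]; linarith) hn2
  have hbase : (4 : ℝ) ^ (-((n : ℝ) + 1)) ≤ r / r0 := by
    have h1 : (4 : ℝ) ^ (-((n : ℝ) + 1)) = ((4 : ℝ) ^ (n + 1))⁻¹ := by
      rw [← Real.rpow_natCast (4 : ℝ) (n + 1), ← Real.rpow_neg (by norm_num)]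
      push_cast; ring_nf
    rw [h1, le_div_iff₀ hr0, inv_mul_le_iff₀ (by positivity)]
    nlinarith [pow_pos (show (0:ℝ) < 4 by norm_num) (n+1)]
  have hpow : (4 : ℝ) ^ (-((n : ℝ) + 1) * α) ≤ (r / r0) ^ α := by
    rw [Real.rpow_mul (by norm_num : (0:ℝ) ≤ 4)]
    exact Real.rpow_le_rpow (by positivity) hbase hα0.le
  have heq : (4 : ℝ) ^ α * (4 : ℝ) ^ (-((n : ℝ) + 1) * α) = (4 : ℝ) ^ (-(n : ℝ) * α) := by
    rw [← Real.rpow_add (by norm_num : (0:ℝ) < 4)]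
    ring_nf
  calc w r ≤ M * (4 : ℝ) ^ (-(n : ℝ) * α) := hwr
  _ = (4 : ℝ) ^ α * M * (4 : ℝ) ^ (-((n : ℝ) + 1) * α) := by
      linear_combination (-M) * heq
  _ ≤ (4 : ℝ) ^ α * M * (r / r0) ^ α := by
      apply mul_le_mul_of_nonneg_left hpow (by positivity)
  _ = N * (r / r0) ^ α := by rw [hN]
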